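/- arXiv:1702.03987 — 3 statements merged into one kernel-verified Lean document; each statement's English description precedes it below -/
import Mathlib

section
/- Let R₀ > 0, y = (x_ref, y_ref) ∈ ℝ² with |y| ≤ R₀/2, and r_θ = (R₀ cos θ, R₀ sin θ). Define d(θ) = |r_θ - y|. Then for every k ≥ 1, d^{(2k)}(θ) = -(-1)^k (x_ref cos θ + y_ref sin θ) + E_k(θ) where |E_k(θ)| ≤ C_k · |y|²/R₀ uniformly in θ. -/
/-!
Scaling by `R₀` reduces to the unit circle: with `(a, b) = y / R₀`, `u(θ) = a cos θ + b sin θ` and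
`D(θ) = |(cos θ, sin θ) - (a, b)|` one has `D² = 1 - 2u + |(a, b)|²` and `D' = -u(θ + π/2) / D`.
Inductively, `D⁽ⁿ⁾ = -u(θ + nπ/2) / D + Gₙ`, where `Gₙ` is a combination of products of at least two
shifted copies of `u` divided by powers of `D`; since `|u| ≤ |(a, b)| ≤ 1/2` and `D ≥ 1/2`, such
terms are `O(|(a, b)|²)`. For `n = 2k`, `u(θ + kπ) = (-1)ᵏ u(θ)`, and
`|u / D - u| ≤ |u| |D - 1| / D ≤ 2 |(a, b)|²`.
-/

open Real

namespace CircleDistance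

/-- `proj a b (θ + π / 2)` is the derivative of `proj a b` at `θ`, so shifts of the argument
represent all derivatives of `proj`. -/
noncomputable def proj (a b θ : ℝ) : ℝ := a * cos θ + b * sin θ

noncomputable def distance (a b θ : ℝ) : ℝ := √((cos θ - a) ^ 2 + (sin θ - b) ^ 2)

theorem hasDerivAt_proj_add (a b φ θ : ℝ) :
    HasDerivAt (fun θ => proj a b (θ + φ)) (proj a b (θ + φ + π / 2)) θ := by
  have h := (((hasDerivAt_cos (θ + φ)).const_mul a).add
    ((hasDerivAt_sin (θ + φ)).const_mul b)).comp_add_const θ φ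
  refine h.congr_deriv ?_
  simp only [proj, cos_add_pi_div_two, sin_add_pi_div_two]

theorem proj_add_nat_mul_pi (a b θ : ℝ) (k : ℕ) :
    proj a b (θ + k * π) = (-1) ^ k * proj a b θ := by
  simp only [proj, cos_add_nat_mul_pi, sin_add_nat_mul_pi]
  ring

theorem abs_proj_le (a b θ : ℝ) : |proj a b θ| ≤ √(a ^ 2 + b ^ 2) := by
  rw [← sqrt_sq_eq_abs, proj]
  refine sqrt_le_sqrt ?_
  nlinarith [sin_sq_add_cos_sq θ, sq_nonneg (a * sin θ - b * cos θ)]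

theorem distance_sq (a b θ : ℝ) :
    distance a b θ ^ 2 = 1 - 2 * proj a b θ + (a ^ 2 + b ^ 2) := by
  rw [distance, sq_sqrt (by positivity), proj]
  nlinarith [sin_sq_add_cos_sq θ]

theorem abs_distance_sub_one_le (a b θ : ℝ) : |distance a b θ - 1| ≤ √(a ^ 2 + b ^ 2) := by
  have hε := sq_sqrt (add_nonneg (sq_nonneg a) (sq_nonneg b))
  have hD := distance_sq a b θ
  have hu := abs_le.mp (abs_proj_le a b θ)
  have h0 : 0 ≤ distance a b θ := sqrt_nonneg _
  have h1 : 0 ≤ √(a ^ 2 + b ^ 2) := sqrt_nonneg _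
  rw [abs_le]
  constructor <;> nlinarith

theorem half_le_distance {a b : ℝ} (hs : a ^ 2 + b ^ 2 ≤ 1 / 4) (θ : ℝ) :
    1 / 2 ≤ distance a b θ := by
  have hε : √(a ^ 2 + b ^ 2) ≤ 1 / 2 := by
    rw [sqrt_le_left (by norm_num)]; linarith
  linarith [(abs_le.mp (abs_distance_sub_one_le a b θ)).1]

theorem hasDerivAt_distance {a b θ : ℝ} (h : distance a b θ ≠ 0) :
    HasDerivAt (distance a b) (-proj a b (θ + π / 2) / distance a b θ) θ := by
  have hw : (cos θ - a) ^ 2 + (sin θ - b) ^ 2 ≠ 0 := fun h0 => h (by rw [distance, h0, sqrt_zero])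
  have h' := ((((hasDerivAt_cos θ).sub_const a).pow 2).add
    (((hasDerivAt_sin θ).sub_const b).pow 2)).sqrt hw
  refine h'.congr_deriv ?_
  change _ / (2 * distance a b θ) = _
  simp only [proj, cos_add_pi_div_two, sin_add_pi_div_two]
  field_simp
  ring

inductive IsQuadraticOrder : (ℝ → ℝ → ℝ → ℝ) → Prop
  | zero : IsQuadraticOrder fun _ _ _ => 0
  | add {F G} : IsQuadraticOrder F → IsQuadraticOrder G →
      IsQuadraticOrder fun a b θ => F a b θ + G a b θ
  | neg {F} : IsQuadraticOrder F → IsQuadraticOrder fun a b θ => -F a b θ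
  | proj_mul_proj (φ ψ : ℝ) : IsQuadraticOrder fun a b θ => proj a b (θ + φ) * proj a b (θ + ψ)
  | proj_mul {F} (φ : ℝ) : IsQuadraticOrder F →
      IsQuadraticOrder fun a b θ => proj a b (θ + φ) * F a b θ
  | div_distance {F} : IsQuadraticOrder F → IsQuadraticOrder fun a b θ => F a b θ / distance a b θ

namespace IsQuadraticOrder

theorem exists_bound {F : ℝ → ℝ → ℝ → ℝ} (hF : IsQuadraticOrder F) :
    ∃ C, 0 ≤ C ∧ ∀ a b, a ^ 2 + b ^ 2 ≤ 1 / 4 → ∀ θ, |F a b θ| ≤ C * (a ^ 2 + b ^ 2) := by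
  induction hF with
  | zero => exact ⟨0, le_rfl, fun a b _ θ => by simp⟩
  | @add F G _ _ ihF ihG =>
    obtain ⟨C, hC, hboundF⟩ := ihF
    obtain ⟨C', hC', hboundG⟩ := ihG
    refine ⟨C + C', add_nonneg hC hC', fun a b hs θ => ?_⟩
    linarith [abs_add_le (F a b θ) (G a b θ), hboundF a b hs θ, hboundG a b hs θ]
  | neg _ ih =>
    obtain ⟨C, hC, hbound⟩ := ih
    exact ⟨C, hC, fun a b hs θ => by simpa only [abs_neg] using hbound a b hs θ⟩
  | proj_mul_proj φ ψ =>
    refine ⟨1, zero_le_one, fun a b _ θ => ?_⟩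
    rw [abs_mul, one_mul, ← sq_sqrt (add_nonneg (sq_nonneg a) (sq_nonneg b)), sq]
    exact mul_le_mul (abs_proj_le a b _) (abs_proj_le a b _) (abs_nonneg _) (sqrt_nonneg _)
  | proj_mul φ _ ih =>
    obtain ⟨C, hC, hbound⟩ := ih
    refine ⟨C, hC, fun a b hs θ => ?_⟩
    have hu : |proj a b (θ + φ)| ≤ 1 :=
      (abs_proj_le a b _).trans (sqrt_le_one.mpr (by linarith))
    rw [abs_mul]
    exact (mul_le_of_le_one_left (abs_nonneg _) hu).trans (hbound a b hs θ)
  | @div_distance F _ ih =>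
    obtain ⟨C, hC, hbound⟩ := ih
    refine ⟨2 * C, by positivity, fun a b hs θ => ?_⟩
    have hD := half_le_distance hs θ
    rw [abs_div, abs_of_pos (show 0 < distance a b θ by linarith), div_le_iff₀ (by linarith)]
    nlinarith [hbound a b hs θ, abs_nonneg (F a b θ)]

theorem exists_hasDerivAt {F : ℝ → ℝ → ℝ → ℝ} (hF : IsQuadraticOrder F) :
    ∃ G, IsQuadraticOrder G ∧
      ∀ a b, a ^ 2 + b ^ 2 ≤ 1 / 4 → ∀ θ, HasDerivAt (F a b) (G a b θ) θ := by
  induction hF with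
  | zero => exact ⟨_, zero, fun a b _ θ => hasDerivAt_const θ 0⟩
  | add _ _ ihF ihG =>
    obtain ⟨F', hF', hderivF⟩ := ihF
    obtain ⟨G', hG', hderivG⟩ := ihG
    exact ⟨_, add hF' hG', fun a b hs θ => (hderivF a b hs θ).add (hderivG a b hs θ)⟩
  | neg _ ih =>
    obtain ⟨F', hF', hderiv⟩ := ih
    exact ⟨_, neg hF', fun a b hs θ => (hderiv a b hs θ).neg⟩
  | proj_mul_proj φ ψ =>
    refine ⟨_, add (proj_mul_proj (φ + π / 2) ψ) (proj_mul_proj φ (ψ + π / 2)),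
      fun a b _ θ => ?_⟩
    simpa only [add_assoc] using (hasDerivAt_proj_add a b φ θ).fun_mul (hasDerivAt_proj_add a b ψ θ)
  | proj_mul φ hF ih =>
    obtain ⟨F', hF', hderiv⟩ := ih
    refine ⟨_, add (proj_mul (φ + π / 2) hF) (proj_mul φ hF'),
      fun a b hs θ => ?_⟩
    simpa only [add_assoc] using (hasDerivAt_proj_add a b φ θ).fun_mul (hderiv a b hs θ)
  | @div_distance F hF ih =>
    obtain ⟨F', hF', hderiv⟩ := ih
    refine ⟨_, add (div_distance hF')
      (div_distance (div_distance (div_distance (proj_mul (π / 2) hF)))), fun a b hs θ => ?_⟩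
    have hD : distance a b θ ≠ 0 := by linarith [half_le_distance hs θ]
    refine ((hderiv a b hs θ).fun_div (hasDerivAt_distance hD) hD).congr_deriv ?_
    field_simp
    ring

end IsQuadraticOrder

theorem exists_iteratedDeriv_distance_eq {n : ℕ} (hn : 1 ≤ n) :
    ∃ G, IsQuadraticOrder G ∧ ∀ a b, a ^ 2 + b ^ 2 ≤ 1 / 4 → ∀ θ,
      iteratedDeriv n (distance a b) θ = G a b θ - proj a b (θ + n * (π / 2)) / distance a b θ := by
  induction n, hn using Nat.le_induction with
  | base =>
    refine ⟨_, .zero, fun a b hs θ => ?_⟩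
    have hD : distance a b θ ≠ 0 := by linarith [half_le_distance hs θ]
    rw [iteratedDeriv_one, (hasDerivAt_distance hD).deriv]
    simp only [Nat.cast_one, one_mul, zero_sub, neg_div]
  | succ n _ ih =>
    obtain ⟨G, hG, hrep⟩ := ih
    obtain ⟨G', hG', hderiv⟩ := hG.exists_hasDerivAt
    refine ⟨_, hG'.add (.neg (.div_distance (.div_distance (.div_distance
      (.proj_mul_proj (n * (π / 2)) (π / 2)))))), fun a b hs θ => ?_⟩
    have hD : distance a b θ ≠ 0 := by linarith [half_le_distance hs θ]
    have hlead := (hasDerivAt_proj_add a b (n * (π / 2)) θ).fun_div (hasDerivAt_distance hD) hD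
    rw [iteratedDeriv_succ, funext (hrep a b hs), ((hderiv a b hs θ).fun_sub hlead).deriv,
      show θ + n * (π / 2) + π / 2 = θ + ↑(n + 1) * (π / 2) by push_cast; ring]
    field_simp
    ring

theorem exists_abs_iteratedDeriv_distance_sub_le {k : ℕ} (hk : 1 ≤ k) :
    ∃ C, 0 < C ∧ ∀ a b, a ^ 2 + b ^ 2 ≤ 1 / 4 → ∀ θ,
      |iteratedDeriv (2 * k) (distance a b) θ - -(-1) ^ k * proj a b θ| ≤ C * (a ^ 2 + b ^ 2) := by
  obtain ⟨G, hG, hrep⟩ := exists_iteratedDeriv_distance_eq (n := 2 * k) (by omega)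
  obtain ⟨C, hC, hbound⟩ := hG.exists_bound
  refine ⟨C + 2, by linarith, fun a b hs θ => ?_⟩
  have hD := half_le_distance hs θ
  have hε := sq_sqrt (add_nonneg (sq_nonneg a) (sq_nonneg b))
  have hlead : |proj a b θ * (distance a b θ - 1) / distance a b θ| ≤ 2 * (a ^ 2 + b ^ 2) := by
    rw [abs_div, abs_mul, abs_of_pos (show 0 < distance a b θ by linarith),
      div_le_iff₀ (by linarith)]
    have := mul_le_mul (abs_proj_le a b θ) (abs_distance_sub_one_le a b θ) (abs_nonneg _)
      (sqrt_nonneg _)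
    nlinarith
  have hsplit : iteratedDeriv (2 * k) (distance a b) θ - -(-1) ^ k * proj a b θ
      = G a b θ + (-1) ^ k * (proj a b θ * (distance a b θ - 1) / distance a b θ) := by
    rw [hrep a b hs θ, show θ + ↑(2 * k) * (π / 2) = θ + k * π by push_cast; ring,
      proj_add_nat_mul_pi]
    field_simp
    ring
  calc _ = |G a b θ + (-1) ^ k * (proj a b θ * (distance a b θ - 1) / distance a b θ)| := by
        rw [hsplit]
    _ ≤ C * (a ^ 2 + b ^ 2) + 2 * (a ^ 2 + b ^ 2) := by
        refine (abs_add_le _ _).trans (add_le_add (hbound a b hs θ) ?_)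
        rwa [abs_mul, abs_pow, abs_neg, abs_one, one_pow, one_mul]
    _ = (C + 2) * (a ^ 2 + b ^ 2) := by ring

theorem mul_distance_div {R : ℝ} (hR : 0 < R) (x y θ : ℝ) :
    R * distance (x / R) (y / R) θ = √((R * cos θ - x) ^ 2 + (R * sin θ - y) ^ 2) := by
  calc R * distance (x / R) (y / R) θ
      = √(R ^ 2 * ((cos θ - x / R) ^ 2 + (sin θ - y / R) ^ 2)) := by
        rw [sqrt_mul (sq_nonneg R), sqrt_sq hR.le, distance]
    _ = _ := by congr 1; field_simp

theorem mul_proj_div {R : ℝ} (hR : R ≠ 0) (x y θ : ℝ) :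
    R * proj (x / R) (y / R) θ = x * cos θ + y * sin θ := by
  rw [proj]
  field_simp

end CircleDistance

open CircleDistance in
theorem even_derivatives_of_distance (k : ℕ) (hk : 1 ≤ k) :
    ∃ C : ℝ, 0 < C ∧ ∀ (R₀ x_ref y_ref : ℝ), 0 < R₀ →
      Real.sqrt (x_ref ^ 2 + y_ref ^ 2) ≤ R₀ / 2 → ∀ θ : ℝ,
      |iteratedDeriv (2 * k)
          (fun φ => Real.sqrt ((R₀ * Real.cos φ - x_ref) ^ 2 + (R₀ * Real.sin φ - y_ref) ^ 2)) θ
        - (-(-1 : ℝ) ^ k * (x_ref * Real.cos θ + y_ref * Real.sin θ))|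
      ≤ C * (x_ref ^ 2 + y_ref ^ 2) / R₀ := by
  obtain ⟨C, hC, hbound⟩ := exists_abs_iteratedDeriv_distance_sub_le hk
  refine ⟨C, hC, fun R x y hR hxy θ => ?_⟩
  have hs : (x / R) ^ 2 + (y / R) ^ 2 ≤ 1 / 4 := by
    have := (sqrt_le_left (by positivity)).mp hxy
    rw [div_pow, div_pow, ← add_div, div_le_iff₀ (by positivity)]
    linarith
  simp_rw [← mul_distance_div hR, ← mul_proj_div hR.ne']
  rw [iteratedDeriv_const_mul_field, ← mul_assoc, mul_comm _ R, mul_assoc, ← mul_sub, abs_mul,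
    abs_of_pos hR]
  calc R * |_| ≤ R * (C * ((x / R) ^ 2 + (y / R) ^ 2)) := by gcongr; exact hbound _ _ hs θ
    _ = C * (x ^ 2 + y ^ 2) / R := by field_simp
end

section
/- Let R₀ > 0, y ∈ ℝ² with |y| ≤ R₀/2, r_θ = (R₀ cos θ, R₀ sin θ), and write y = (x_ref, y_ref). Then for all θ, h ∈ ℝ: |r_{θ+h/2} - y| + |y - r_{θ-h/2}| = 2|r_θ - y| + 4 sin²(h/4)·(x_ref cos θ + y_ref sin θ) + E(θ,h), with |E(θ,h)| ≤ C·|y|²/R₀ for a constant C independent of θ, h, y, R₀. -/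
open Real

private lemma dist_approx (R₀ x y : ℝ) (hR : 0 < R₀)
    (hρ : Real.sqrt (x ^ 2 + y ^ 2) ≤ R₀ / 2) (φ : ℝ) :
    |Real.sqrt ((R₀ * Real.cos φ - x) ^ 2 + (R₀ * Real.sin φ - y) ^ 2)
      - (R₀ - (x * Real.cos φ + y * Real.sin φ))| ≤ 2 * (x ^ 2 + y ^ 2) / R₀ := by
  set a := x * Real.cos φ + y * Real.sin φ with ha
  have hpy := Real.sin_sq_add_cos_sq φ
  have hρ2 : (0:ℝ) ≤ x ^ 2 + y ^ 2 := by positivity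
  have ha2 : a ^ 2 ≤ x ^ 2 + y ^ 2 := by
    rw [ha]; nlinarith [sq_nonneg (x * Real.sin φ - y * Real.cos φ)]
  have hρR : x ^ 2 + y ^ 2 ≤ (R₀ / 2) ^ 2 := by
    have := Real.sq_sqrt hρ2
    nlinarith [Real.sqrt_nonneg (x ^ 2 + y ^ 2)]
  have haR : |a| ≤ R₀ / 2 := by
    rw [abs_le]; constructor <;> nlinarith
  set d := Real.sqrt ((R₀ * Real.cos φ - x) ^ 2 + (R₀ * Real.sin φ - y) ^ 2) with hd
  have hdnn : 0 ≤ d := Real.sqrt_nonneg _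
  have hdsq : d ^ 2 = R₀ ^ 2 - 2 * R₀ * a + (x ^ 2 + y ^ 2) := by
    rw [hd, ha, Real.sq_sqrt (by positivity)]
    linear_combination (R₀ ^ 2) * hpy
  have hden : R₀ / 2 ≤ d + (R₀ - a) := by
    have : R₀ - a ≥ R₀ / 2 := by rcases abs_le.mp haR with ⟨_, _⟩; linarith
    linarith
  have hkey : (d - (R₀ - a)) * (d + (R₀ - a)) = (x ^ 2 + y ^ 2) - a ^ 2 := by
    linear_combination hdsq
  have habs : |d - (R₀ - a)| * (R₀ / 2) ≤ x ^ 2 + y ^ 2 := by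
    calc |d - (R₀ - a)| * (R₀ / 2) ≤ |d - (R₀ - a)| * (d + (R₀ - a)) := by
          gcongr
      _ = |(d - (R₀ - a)) * (d + (R₀ - a))| := by
          rw [abs_mul, abs_of_nonneg (le_trans (by linarith) hden)]
      _ = |(x ^ 2 + y ^ 2) - a ^ 2| := by rw [hkey]
      _ ≤ x ^ 2 + y ^ 2 := by rw [abs_of_nonneg (by linarith)]; nlinarith
  rw [le_div_iff₀ hR]
  nlinarith [habs]

theorem symmetric_distance_sum_expansion :
    ∃ C : ℝ, 0 < C ∧ ∀ (R₀ x_ref y_ref : ℝ), 0 < R₀ →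
      Real.sqrt (x_ref ^ 2 + y_ref ^ 2) ≤ R₀ / 2 → ∀ θ h : ℝ,
      |Real.sqrt ((R₀ * Real.cos (θ + h / 2) - x_ref) ^ 2
            + (R₀ * Real.sin (θ + h / 2) - y_ref) ^ 2)
        + Real.sqrt ((x_ref - R₀ * Real.cos (θ - h / 2)) ^ 2
            + (y_ref - R₀ * Real.sin (θ - h / 2)) ^ 2)
        - 2 * Real.sqrt ((R₀ * Real.cos θ - x_ref) ^ 2 + (R₀ * Real.sin θ - y_ref) ^ 2)
        - 4 * Real.sin (h / 4) ^ 2 * (x_ref * Real.cos θ + y_ref * Real.sin θ)|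
      ≤ C * (x_ref ^ 2 + y_ref ^ 2) / R₀ := by
  refine ⟨8, by norm_num, fun R₀ x y hR hρ θ h => ?_⟩
  have e1 := dist_approx R₀ x y hR hρ (θ + h / 2)
  have e2 := dist_approx R₀ x y hR hρ (θ - h / 2)
  have e0 := dist_approx R₀ x y hR hρ θ
  have hswap : (x - R₀ * Real.cos (θ - h / 2)) ^ 2 + (y - R₀ * Real.sin (θ - h / 2)) ^ 2
      = (R₀ * Real.cos (θ - h / 2) - x) ^ 2 + (R₀ * Real.sin (θ - h / 2) - y) ^ 2 := by ring
  rw [hswap]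
  -- trig identity: the linearized parts cancel exactly
  have htrig : (x * Real.cos (θ + h / 2) + y * Real.sin (θ + h / 2))
      + (x * Real.cos (θ - h / 2) + y * Real.sin (θ - h / 2))
      = 2 * (x * Real.cos θ + y * Real.sin θ) * Real.cos (h / 2) := by
    rw [Real.cos_add, Real.cos_sub, Real.sin_add, Real.sin_sub]; ring
  have hhalf : Real.cos (h / 2) = 1 - 2 * Real.sin (h / 4) ^ 2 := by
    have : h / 2 = 2 * (h / 4) := by ring
    rw [this, Real.cos_two_mul]
    have := Real.sin_sq_add_cos_sq (h / 4)
    linarith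
  set d1 := Real.sqrt ((R₀ * Real.cos (θ + h / 2) - x) ^ 2 + (R₀ * Real.sin (θ + h / 2) - y) ^ 2)
  set d2 := Real.sqrt ((R₀ * Real.cos (θ - h / 2) - x) ^ 2 + (R₀ * Real.sin (θ - h / 2) - y) ^ 2)
  set d0 := Real.sqrt ((R₀ * Real.cos θ - x) ^ 2 + (R₀ * Real.sin θ - y) ^ 2)
  have hcomb : d1 + d2 - 2 * d0 - 4 * Real.sin (h / 4) ^ 2 * (x * Real.cos θ + y * Real.sin θ)
      = (d1 - (R₀ - (x * Real.cos (θ + h / 2) + y * Real.sin (θ + h / 2))))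
      + (d2 - (R₀ - (x * Real.cos (θ - h / 2) + y * Real.sin (θ - h / 2))))
      - 2 * (d0 - (R₀ - (x * Real.cos θ + y * Real.sin θ))) := by
    rw [hhalf] at htrig; linarith
  rw [hcomb]
  calc |_| ≤ |d1 - (R₀ - (x * Real.cos (θ + h / 2) + y * Real.sin (θ + h / 2)))|
      + |d2 - (R₀ - (x * Real.cos (θ - h / 2) + y * Real.sin (θ - h / 2)))|
      + 2 * |d0 - (R₀ - (x * Real.cos θ + y * Real.sin θ))| := by
        have key : ∀ a b c : ℝ, |a + b - 2 * c| ≤ |a| + |b| + 2 * |c| := by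
          intro a b c
          rw [abs_le]
          constructor <;> rcases abs_cases a with ⟨_,_⟩ <;>
            rcases abs_cases b with ⟨_,_⟩ <;> rcases abs_cases c with ⟨_,_⟩ <;> linarith
        exact key _ _ _
    _ ≤ 8 * (x ^ 2 + y ^ 2) / R₀ := by
        rw [show (8:ℝ) * (x ^ 2 + y ^ 2) / R₀ = 2*(x^2+y^2)/R₀ + 2*(x^2+y^2)/R₀ + 2*(2*(x^2+y^2)/R₀) by ring]
        gcongr
end

section
/- Let y = (x_ref, y_ref), R₀ > 0, r_θ = (R₀ cos θ, R₀ sin θ). If |y| ≤ R₀/2, then | (∂/∂θ)|r_θ - y| - (x_ref sin θ - y_ref cos θ) | ≤ C|y|²/R₀ uniformly in θ. -/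
open Real

set_option maxHeartbeats 1000000 in
theorem distance_first_derivative_expansion :
    ∃ C : ℝ, 0 < C ∧ ∀ (R₀ x_ref y_ref : ℝ), 0 < R₀ →
      Real.sqrt (x_ref ^ 2 + y_ref ^ 2) ≤ R₀ / 2 → ∀ θ : ℝ,
      |deriv (fun φ =>
            Real.sqrt ((R₀ * Real.cos φ - x_ref) ^ 2 + (R₀ * Real.sin φ - y_ref) ^ 2)) θ
        - (x_ref * Real.sin θ - y_ref * Real.cos θ)|
      ≤ C * (x_ref ^ 2 + y_ref ^ 2) / R₀ := by
  refine ⟨5, by norm_num, ?_⟩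
  intro R₀ x y hR hs θ
  set s := Real.sqrt (x ^ 2 + y ^ 2) with hs_def
  have hm : (0:ℝ) ≤ x ^ 2 + y ^ 2 := by positivity
  have hs2 : s ^ 2 = x ^ 2 + y ^ 2 := Real.sq_sqrt hm
  have hs0 : 0 ≤ s := Real.sqrt_nonneg _
  set g : ℝ := (R₀ * Real.cos θ - x) ^ 2 + (R₀ * Real.sin θ - y) ^ 2 with hg
  have htrig := Real.sin_sq_add_cos_sq θ
  -- Cauchy–Schwarz type bound
  have hcs : (x * Real.cos θ + y * Real.sin θ) ^ 2 ≤ x ^ 2 + y ^ 2 := by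
    nlinarith [sq_nonneg (x * Real.sin θ - y * Real.cos θ)]
  have ha_le : |x * Real.cos θ + y * Real.sin θ| ≤ s := by
    rw [← Real.sqrt_sq_eq_abs, hs_def]
    exact Real.sqrt_le_sqrt hcs
  have ha1 : x * Real.cos θ + y * Real.sin θ ≤ s := le_trans (le_abs_self _) ha_le
  have ha2 : -s ≤ x * Real.cos θ + y * Real.sin θ := neg_le_of_abs_le ha_le
  have hg_eq : g = R₀ ^ 2 - 2 * R₀ * (x * Real.cos θ + y * Real.sin θ) + (x ^ 2 + y ^ 2) := by
    rw [hg]; linear_combination R₀ ^ 2 * htrig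
  have haR1 := mul_le_mul_of_nonneg_left ha1 (le_of_lt hR)
  have haR2 := mul_le_mul_of_nonneg_left ha2 (le_of_lt hR)
  have hg_lb : (R₀ - s) ^ 2 ≤ g := by nlinarith [hg_eq, hs2]
  have hg_ub : g ≤ (R₀ + s) ^ 2 := by nlinarith [hg_eq, hs2]
  have hRs : 0 ≤ R₀ - s := by linarith
  set G := Real.sqrt g with hGdef
  have hG0 : 0 ≤ G := Real.sqrt_nonneg _
  have hG1 : R₀ - s ≤ G := by
    rw [hGdef, show R₀ - s = Real.sqrt ((R₀ - s) ^ 2) from (Real.sqrt_sq hRs).symm]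
    exact Real.sqrt_le_sqrt hg_lb
  have hG2 : G ≤ R₀ + s := by
    rw [hGdef, show R₀ + s = Real.sqrt ((R₀ + s) ^ 2) from (Real.sqrt_sq (by linarith)).symm]
    exact Real.sqrt_le_sqrt hg_ub
  have hGpos : R₀ / 2 ≤ G := by linarith
  have hGpos' : 0 < G := lt_of_lt_of_le (by linarith) hGpos
  have hgpos : 0 < g := by
    have := Real.sqrt_pos.mp (hGdef ▸ hGpos')
    exact this
  -- derivative computation
  have hd1 : HasDerivAt (fun φ => R₀ * Real.cos φ - x) (R₀ * (-Real.sin θ)) θ :=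
    ((Real.hasDerivAt_cos θ).const_mul R₀).sub_const x
  have hd2 : HasDerivAt (fun φ => R₀ * Real.sin φ - y) (R₀ * Real.cos θ) θ :=
    ((Real.hasDerivAt_sin θ).const_mul R₀).sub_const y
  have hgd : HasDerivAt (fun φ => (R₀ * Real.cos φ - x) ^ 2 + (R₀ * Real.sin φ - y) ^ 2)
      (2 * (R₀ * Real.cos θ - x) ^ 1 * (R₀ * (-Real.sin θ))
        + 2 * (R₀ * Real.sin θ - y) ^ 1 * (R₀ * Real.cos θ)) θ :=
    (hd1.pow 2).add (hd2.pow 2)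
  have hfd := hgd.sqrt (ne_of_gt hgpos)
  have hderiv : deriv (fun φ =>
      Real.sqrt ((R₀ * Real.cos φ - x) ^ 2 + (R₀ * Real.sin φ - y) ^ 2)) θ
      = R₀ * (x * Real.sin θ - y * Real.cos θ) / G := by
    rw [hfd.deriv]
    rw [← hg, ← hGdef]
    have hnum : 2 * (R₀ * Real.cos θ - x) ^ 1 * (R₀ * -Real.sin θ)
        + 2 * (R₀ * Real.sin θ - y) ^ 1 * (R₀ * Real.cos θ)
        = 2 * (R₀ * (x * Real.sin θ - y * Real.cos θ)) := by ring
    rw [hnum, mul_div_mul_left _ _ (two_ne_zero)]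
  rw [hderiv]
  set t := x * Real.sin θ - y * Real.cos θ with ht
  have ht2 : t ^ 2 + (x * Real.cos θ + y * Real.sin θ) ^ 2
      = (x ^ 2 + y ^ 2) * (Real.sin θ ^ 2 + Real.cos θ ^ 2) := by rw [ht]; ring
  rw [htrig, mul_one] at ht2
  have ht_le : |t| ≤ s := by
    rw [← Real.sqrt_sq_eq_abs, hs_def]
    apply Real.sqrt_le_sqrt
    nlinarith [sq_nonneg (x * Real.cos θ + y * Real.sin θ)]
  have hkey : R₀ * t / G - t = t * (R₀ - G) / G := by field_simp
  rw [hkey, abs_div, abs_mul, abs_of_pos hGpos']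
  have hRG : |R₀ - G| ≤ s := abs_le.mpr ⟨by linarith, by linarith⟩
  rw [div_le_div_iff₀ hGpos' hR]
  have h1 : |t| * |R₀ - G| ≤ s * s :=
    mul_le_mul ht_le hRG (abs_nonneg _) hs0
  have h2 : (x ^ 2 + y ^ 2) * R₀ ≤ (x ^ 2 + y ^ 2) * (2 * G) :=
    mul_le_mul_of_nonneg_left (by linarith) hm
  calc |t| * |R₀ - G| * R₀ ≤ s * s * R₀ := mul_le_mul_of_nonneg_right h1 (le_of_lt hR)
    _ = (x ^ 2 + y ^ 2) * R₀ := by rw [← hs2]; ring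
    _ ≤ (x ^ 2 + y ^ 2) * (2 * G) := h2
    _ ≤ 5 * (x ^ 2 + y ^ 2) * G := by nlinarith [mul_nonneg hm hG0]
end
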